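/- Let t₁, …, t_n be histories in a history sDAG (V,E), and for 2 ≤ i ≤ n let sᵢ be a subhistory of tᵢ. Then, whenever each successive swap is defined (i.e., at each step a conforming subhistory exists), the history t₁ ◁ s₂ ◁ ⋯ ◁ s_n is a history in (V,E). -/

import Mathlib

universe u v

/-- A node of a history sDAG: either the universal ancestor (UA) node `ρ`,
or a node carrying a label `ℓ : Y` and a subpartition `U : Set (Set Y)`. -/
inductive HNode (Y : Type u) : Type u
  | ua : HNode Y
  | node : Y → Set (Set Y) → HNode Y

namespace HistorySDAGs

variable {Y : Type u}

/-- `U ∈ Part(Y)`: `U` is a set of pairwise disjoint nonempty (finite) clades with `|U| ≠ 1`. -/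
def IsPart (U : Set (Set Y)) : Prop :=
  (∀ C ∈ U, C ≠ ∅) ∧
  (∀ C₁ ∈ U, ∀ C₂ ∈ U, C₁ ≠ C₂ → Disjoint C₁ C₂) ∧
  (∀ C, U ≠ {C}) ∧
  U.Finite ∧ ∀ C ∈ U, C.Finite

open Classical in
/-- The clade union of a node. -/
noncomputable def cladeUnion : HNode Y → Set Y
  | HNode.ua => ∅
  | HNode.node ℓ U => if U = ∅ then {ℓ} else ⋃₀ U

/-- Reachability via directed edges in `E`. -/
def Reach (E : Set (HNode Y × HNode Y)) (a b : HNode Y) : Prop :=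
  Relation.ReflTransGen (fun x y => (x, y) ∈ E) a b

/-- `(V, E)` is a history sDAG on labels `Y`. -/
structure IsHSDAG (V : Set (HNode Y)) (E : Set (HNode Y × HNode Y)) : Prop where
  ua_mem : HNode.ua ∈ V
  valid : ∀ ℓ U, HNode.node ℓ U ∈ V → IsPart U
  edge_mem : ∀ e ∈ E, e.1 ∈ V ∧ e.2 ∈ V
  reach_ua : ∀ v ∈ V, Reach E HNode.ua v
  no_in_ua : ∀ v : HNode Y, (v, HNode.ua) ∉ E
  edge_clade : ∀ ℓ U v, (HNode.node ℓ U, v) ∈ E → cladeUnion v ∈ U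
  clade_cov : ∀ ℓ U, HNode.node ℓ U ∈ V → ∀ C ∈ U,
      ∃ v, (HNode.node ℓ U, v) ∈ E ∧ cladeUnion v = C

/-- Every node-clade pair of `V` has exactly one descendant edge in `E`. -/
def UniqueDesc (V : Set (HNode Y)) (E : Set (HNode Y × HNode Y)) : Prop :=
  ∀ ℓ U, HNode.node ℓ U ∈ V → ∀ C ∈ U,
    ∃! vc, (HNode.node ℓ U, vc) ∈ E ∧ cladeUnion vc = C

/-- `(V, E)` is a history: a history sDAG in which `ρ` has exactly one child and
each node-clade pair has exactly one descendant edge. -/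
def IsHistory (V : Set (HNode Y)) (E : Set (HNode Y × HNode Y)) : Prop :=
  IsHSDAG V E ∧ (∃! v, (HNode.ua, v) ∈ E) ∧ UniqueDesc V E

/-- `(Vs, Es)` is a subhistory of `(V, E)` with root node `vr`. -/
structure IsSubhistoryRooted (V : Set (HNode Y)) (E : Set (HNode Y × HNode Y))
    (Vs : Set (HNode Y)) (Es : Set (HNode Y × HNode Y)) (vr : HNode Y) : Prop where
  subV : Vs ⊆ V
  subE : Es ⊆ E
  ua_not_mem : HNode.ua ∉ Vs
  edge_mem : ∀ e ∈ Es, e.1 ∈ Vs ∧ e.2 ∈ Vs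
  root_mem : vr ∈ Vs
  reach_root : ∀ v ∈ Vs, Reach Es vr v
  unique_desc : ∀ ℓ U, HNode.node ℓ U ∈ Vs → ∀ C ∈ U,
      ∃! vc, (HNode.node ℓ U, vc) ∈ Es ∧ cladeUnion vc = C

/-- `(Vs, Es)` is a subhistory of `(V, E)`. -/
def IsSubhistory (V : Set (HNode Y)) (E : Set (HNode Y × HNode Y))
    (Vs : Set (HNode Y)) (Es : Set (HNode Y × HNode Y)) : Prop :=
  ∃ vr, IsSubhistoryRooted V E Vs Es vr

/-- `(Vt, Et)` is a history in (a trim of) the history sDAG `(V, E)`. -/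
def HistoryIn (V : Set (HNode Y)) (E : Set (HNode Y × HNode Y))
    (Vt : Set (HNode Y)) (Et : Set (HNode Y × HNode Y)) : Prop :=
  Vt ⊆ V ∧ Et ⊆ E ∧ IsHistory Vt Et

/-- The set of labels of leaf nodes in a node set. -/
def leafLabels (Vt : Set (HNode Y)) : Set Y := {ℓ | HNode.node ℓ ∅ ∈ Vt}

/-- A candidate history/graph: a pair of a node set and an edge set. -/
abbrev Hist (Y : Type u) := Set (HNode Y) × Set (HNode Y × HNode Y)

/-- The node set of the history sDAG constructed from the collection `T`. -/
def unionV (T : Set (Hist Y)) : Set (HNode Y) := ⋃ t ∈ T, t.1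

/-- The edge set of the history sDAG constructed from the collection `T`. -/
def unionE (T : Set (Hist Y)) : Set (HNode Y × HNode Y) := ⋃ t ∈ T, t.2

/-- The node set of the complete history sDAG on labels `Y`. -/
def completeV (Y : Type u) : Set (HNode Y) :=
  {v | v = HNode.ua ∨ ∃ ℓ U, v = HNode.node ℓ U ∧ IsPart U}

/-- The edge set of the complete history sDAG on labels `Y`. -/
def completeE (Y : Type u) : Set (HNode Y × HNode Y) :=
  {e | e.1 ∈ completeV Y ∧ e.2 ∈ completeV Y ∧ e.2 ≠ HNode.ua ∧
    (e.1 = HNode.ua ∨ ∃ ℓ U, e.1 = HNode.node ℓ U ∧ cladeUnion e.2 ∈ U)}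

variable {W : Type v}

/-- The weight `g_f` of a subgraph with edge set `Es`: the sum of `f` over all edges. -/
noncomputable def gweight [AddCommMonoid W] (f : HNode Y × HNode Y → W)
    (Es : Set (HNode Y × HNode Y)) : W := ∑ᶠ e ∈ Es, f e

/-- The order is total on the subset `S` of `W`. -/
def TotalOn [PartialOrder W] (S : Set W) : Prop := ∀ a ∈ S, ∀ b ∈ S, a ≤ b ∨ b ≤ a

/-- The order respects addition on the subset `S` of `W`. -/
def RespectsAdd [AddCommMonoid W] [PartialOrder W] (S : Set W) : Prop :=
  ∀ a ∈ S, ∀ b ∈ S, ∀ c : W, a < b ↔ a + c < b + c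

/-- Weights of subhistories of `(V, E)` rooted at `v`. -/
def subWeights [AddCommMonoid W] (f : HNode Y × HNode Y → W)
    (V : Set (HNode Y)) (E : Set (HNode Y × HNode Y)) (v : HNode Y) : Set W :=
  {w | ∃ Vs Es, IsSubhistoryRooted V E Vs Es v ∧ w = gweight f Es}

/-- Weights of augmented subhistories below the node-clade pair `(v, C)`. -/
def augWeights [AddCommMonoid W] (f : HNode Y × HNode Y → W)
    (V : Set (HNode Y)) (E : Set (HNode Y × HNode Y)) (v : HNode Y) (C : Set Y) : Set W :=
  {w | ∃ vc Vs Es, (v, vc) ∈ E ∧ cladeUnion vc = C ∧ IsSubhistoryRooted V E Vs Es vc ∧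
    w = gweight f (insert (v, vc) Es)}

/-- Weights of histories in `(V, E)`. -/
def historyWeights [AddCommMonoid W] (f : HNode Y × HNode Y → W)
    (V : Set (HNode Y)) (E : Set (HNode Y × HNode Y)) : Set W :=
  {w | ∃ Vt Et, HistoryIn V E Vt Et ∧ w = gweight f Et}

/-- `W` is clade-ordered with respect to `f` and `(V, E)`. -/
def CladeOrdered [AddCommMonoid W] [PartialOrder W] (f : HNode Y × HNode Y → W)
    (V : Set (HNode Y)) (E : Set (HNode Y × HNode Y)) : Prop :=
  (∀ v ∈ V, v ≠ HNode.ua →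
      TotalOn (subWeights f V E v) ∧ RespectsAdd (subWeights f V E v)) ∧
  (∀ ℓ U, HNode.node ℓ U ∈ V → ∀ C ∈ U,
      TotalOn (augWeights f V E (HNode.node ℓ U) C) ∧
      RespectsAdd (augWeights f V E (HNode.node ℓ U) C)) ∧
  TotalOn (historyWeights f V E)

/-- The minimum-weight histories in `(V, E)` with respect to `g_f`. -/
def minHistories [AddCommMonoid W] [PartialOrder W] (f : HNode Y × HNode Y → W)
    (V : Set (HNode Y)) (E : Set (HNode Y × HNode Y)) : Set (Hist Y) :=
  {t | HistoryIn V E t.1 t.2 ∧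
    ∀ t' : Hist Y, HistoryIn V E t'.1 t'.2 → gweight f t.2 ≤ gweight f t'.2}

open Classical in
/-- The map `q` collapsing the edge `(vp, vc)`, sending both `vp` and `vc` to `vp'`. -/
noncomputable def collapseMap (vp vc vp' : HNode Y) (v : HNode Y) : HNode Y :=
  if v = vp ∨ v = vc then vp' else v

/-- The history obtained by collapsing the edge `(vp, vc)` (into `vp'`) in `t`. -/
noncomputable def collapseEdgeHist (vp vc vp' : HNode Y) (t : Hist Y) : Hist Y :=
  (collapseMap vp vc vp' '' t.1,
   (fun e : HNode Y × HNode Y => (collapseMap vp vc vp' e.1, collapseMap vp vc vp' e.2)) ''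
     (t.2 \ {(vp, vc)}))

/-- The new parent node `(ℓ_p, (U_p ∪ U_c) \ {CU(v_c)})` formed when collapsing an edge. -/
noncomputable def newParent : HNode Y → HNode Y → HNode Y
  | HNode.node ℓp Up, HNode.node ℓc Uc =>
      HNode.node ℓp ((Up ∪ Uc) \ {cladeUnion (HNode.node ℓc Uc)})
  | v, _ => v

/-- `t'` results from `t` by collapsing one label-collapsible edge. -/
def LabelCollapseStep (t t' : Hist Y) : Prop :=
  ∃ ℓ Up Uc, (HNode.node ℓ Up, HNode.node ℓ Uc) ∈ t.2 ∧ Uc ≠ ∅ ∧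
    t' = collapseEdgeHist (HNode.node ℓ Up) (HNode.node ℓ Uc)
        (newParent (HNode.node ℓ Up) (HNode.node ℓ Uc)) t

/-- `t` is label-collapsed: it has no label-collapsible edge. -/
def LabelCollapsed (t : Hist Y) : Prop :=
  ∀ ℓ Up Uc, (HNode.node ℓ Up, HNode.node ℓ Uc) ∈ t.2 → Uc = ∅

/-- `(vp, vc)` is a label-collapsible edge of `G`. -/
def LabelCollapsibleEdge (G : Hist Y) (vp vc : HNode Y) : Prop :=
  (vp, vc) ∈ G.2 ∧ ∃ ℓ Up Uc, vp = HNode.node ℓ Up ∧ vc = HNode.node ℓ Uc ∧ Uc ≠ ∅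

/-- `T` is a label-collapsible edge cover of `G`. -/
def LabelCollapsibleEdgeCover (G : Hist Y) (T : Set (Hist Y)) : Prop :=
  (∀ t ∈ T, HistoryIn G.1 G.2 t.1 t.2) ∧
  (∀ e ∈ G.2, ∃ t ∈ T, e ∈ t.2) ∧
  (∀ vp vc, LabelCollapsibleEdge G vp vc →
    ∀ Vs Es, IsSubhistory G.1 G.2 Vs Es → (vp, vc) ∈ Es →
      ∃ t ∈ T, Vs ⊆ t.1 ∧ Es ⊆ t.2)

open Classical in
/-- Collapsing the edge `(vp, vc)` in the history sDAG `G`, via `E⁺`, `R`, `E⁻`, `E'`, `V'`. -/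
noncomputable def collapseDAGEdge (vp vc : HNode Y) (G : Hist Y) : Hist Y :=
  let vp' := newParent vp vc
  let Eplus : Set (HNode Y × HNode Y) :=
    (G.2 ∪ {e | ∃ v, e = (v, vp') ∧ (v, vp) ∈ G.2}
        ∪ {e | ∃ v, e = (vp', v) ∧ (vp, v) ∈ G.2 ∧ cladeUnion v ≠ cladeUnion vc}
        ∪ {e | ∃ v, e = (vp', v) ∧ (vc, v) ∈ G.2}) \ {(vp, vc)}
  let R : Set (HNode Y × HNode Y) :=
    if ∃ v, (vp, v) ∈ Eplus ∧ cladeUnion v = cladeUnion vc then ∅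
    else {e ∈ Eplus | e.2 = vp}
  let Eminus := Eplus \ R
  let E' := {e ∈ Eminus | Reach Eminus HNode.ua e.1}
  ({v | ∃ e ∈ E', v = e.1 ∨ v = e.2}, E')

/-- `t'` is obtained from `t` by a subhistory swap, replacing a subhistory of `t` by a
conforming subhistory of some history in `S`. -/
def SwapStepUsing (S : Set (Hist Y)) (t t' : Hist Y) : Prop :=
  ∃ t₂ ∈ S, ∃ Vs' Es' vr' vp,
    IsSubhistoryRooted t₂.1 t₂.2 Vs' Es' vr' ∧ (vp, vr') ∈ t₂.2 ∧
    ∃ Vs Es vr, IsSubhistoryRooted t.1 t.2 Vs Es vr ∧ (vp, vr) ∈ t.2 ∧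
      leafLabels Vs = leafLabels Vs' ∧
      t' = ((t.1 \ Vs) ∪ Vs', (t.2 \ (Es ∪ {(vp, vr)})) ∪ (Es' ∪ {(vp, vr')}))

/-- Leaves of an abstract rooted graph. -/
def IsLeafIn {α : Type v} (nodes : Set α) (edges : Set (α × α)) (x : α) : Prop :=
  x ∈ nodes ∧ ∀ c, (x, c) ∉ edges

/-- Reachability via directed edges in an abstract graph. -/
def GReach {α : Type v} (edges : Set (α × α)) (a b : α) : Prop :=
  Relation.ReflTransGen (fun x y => (x, y) ∈ edges) a b

/-- An (internally) labeled tree: a rooted multifurcating tree with no unifurcations,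
with node labels in `Y` that are injective on leaves. -/
structure IsLabeledTree {α : Type v} (nodes : Set α) (edges : Set (α × α))
    (root : α) (lab : α → Y) : Prop where
  root_mem : root ∈ nodes
  edge_mem : ∀ e ∈ edges, e.1 ∈ nodes ∧ e.2 ∈ nodes
  reach_root : ∀ x ∈ nodes, GReach edges root x
  unique_parent : ∀ x a b, (a, x) ∈ edges → (b, x) ∈ edges → a = b
  no_parent_root : ∀ a, (a, root) ∉ edges
  acyclic : ∀ x, ¬ Relation.TransGen (fun a b => (a, b) ∈ edges) x x
  no_unif : ∀ x ∈ nodes, ¬ (∃! c, (x, c) ∈ edges)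
  leaf_inj : ∀ x y, IsLeafIn nodes edges x → IsLeafIn nodes edges y → lab x = lab y → x = y
  finite : nodes.Finite

/-- The set `C_w` of leaf labels below a node `w` of an abstract labeled tree. -/
def leavesBelow {α : Type v} (nodes : Set α) (edges : Set (α × α)) (lab : α → Y) (w : α) :
    Set Y :=
  {y | ∃ u, IsLeafIn nodes edges u ∧ GReach edges w u ∧ y = lab u}

/-- The history sDAG node `v_w` associated to a node `w` of a labeled tree. -/
def treeNodeOf {α : Type v} (nodes : Set α) (edges : Set (α × α)) (lab : α → Y) (w : α) :
    HNode Y :=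
  HNode.node (lab w) {C | ∃ w', (w, w') ∈ edges ∧ C = leavesBelow nodes edges lab w'}

/-- The node set `V_t` of the history associated to a labeled tree. -/
def treeToHistV {α : Type v} (nodes : Set α) (edges : Set (α × α)) (lab : α → Y) :
    Set (HNode Y) :=
  insert HNode.ua (treeNodeOf nodes edges lab '' nodes)

/-- The edge set `E_t` of the history associated to a labeled tree. -/
def treeToHistE {α : Type v} (nodes : Set α) (edges : Set (α × α)) (root : α) (lab : α → Y) :
    Set (HNode Y × HNode Y) :=
  insert (HNode.ua, treeNodeOf nodes edges lab root)
    {e | ∃ w₁ w₂, (w₁, w₂) ∈ edges ∧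
      e = (treeNodeOf nodes edges lab w₁, treeNodeOf nodes edges lab w₂)}

/-! In a history sDAG clade unions strictly shrink along edges, and in a history two nodes whose
clade unions meet are comparable. Hence a subhistory of a history `t` rooted at `v` has leaf
labels `CU(v)`, contains every edge of `t` leaving it and every node of `t` whose clade union lies
in `CU(v)`. So the root `v'` of a conforming subhistory `s'` has `CU(v') = CU(v)`, and every node
that `s'` shares with `t` is already a node of `s`. After the swap, the nodes of `s'` keep their
descendant edges from `s'` and all other nodes those from `t`, with `(v_p, v)` replaced by
`(v_p, v')`, which descends from the same node-clade pair; the nodes of `s'` are reached from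
`ρ` through `v_p`. -/

theorem existsUnique_replace {α β : Type*} {p : α → Prop} {f : α → β} {a a' : α} {b : β}
    (ha : p a) (hf : f a' = f a) (h : ∃! x, p x ∧ f x = b) :
    ∃! x, (p x ∧ x ≠ a ∨ x = a') ∧ f x = b := by
  obtain ⟨w, ⟨hw, rfl⟩, hu⟩ := h
  by_cases hwa : w = a
  · subst hwa
    refine ⟨a', ⟨Or.inr rfl, hf⟩, ?_⟩
    rintro x ⟨⟨hx, hxw⟩ | rfl, hfx⟩
    · exact absurd (hu x ⟨hx, hfx⟩) hxw
    · rfl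
  · refine ⟨w, ⟨Or.inl ⟨hw, hwa⟩, rfl⟩, ?_⟩
    rintro x ⟨⟨hx, -⟩ | rfl, hfx⟩
    · exact hu x ⟨hx, hfx⟩
    · exact absurd (hu a ⟨ha, hf ▸ hfx⟩).symm hwa

section

variable {V Vs : Set (HNode Y)} {E Es : Set (HNode Y × HNode Y)} {vr : HNode Y}

lemma cladeUnion_leaf (ℓ : Y) : cladeUnion (HNode.node ℓ (∅ : Set (Set Y))) = {ℓ} := by
  simp [cladeUnion]

lemma cladeUnion_of_ne_empty {ℓ : Y} {U : Set (Set Y)} (hU : U ≠ ∅) :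
    cladeUnion (HNode.node ℓ U) = ⋃₀ U := by
  simp [cladeUnion, hU]

lemma subset_cladeUnion_of_mem {ℓ : Y} {U : Set (Set Y)} {C : Set Y} (hC : C ∈ U) :
    C ⊆ cladeUnion (HNode.node ℓ U) := by
  rw [cladeUnion_of_ne_empty (Set.nonempty_of_mem hC).ne_empty]
  exact Set.subset_sUnion_of_mem hC

namespace IsHSDAG

lemma ne_ua_of_edge (hs : IsHSDAG V E) {a b : HNode Y} (he : (a, b) ∈ E) : b ≠ HNode.ua :=
  fun h => hs.no_in_ua a (h ▸ he)

lemma eq_ua_of_reach_ua (hs : IsHSDAG V E) {x : HNode Y} (h : Reach E x HNode.ua) :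
    x = HNode.ua := by
  rcases h.cases_tail with h | ⟨c, -, hc⟩
  · exact h.symm
  · exact absurd hc (hs.no_in_ua c)

lemma cladeUnion_nonempty (hs : IsHSDAG V E) {v : HNode Y} (hv : v ∈ V)
    (hne : v ≠ HNode.ua) : (cladeUnion v).Nonempty := by
  cases v with
  | ua => exact absurd rfl hne
  | node ℓ U =>
    by_cases hU : U = ∅
    · subst hU
      simp [cladeUnion_leaf]
    · obtain ⟨C, hC⟩ := Set.nonempty_iff_ne_empty.mpr hU
      exact (Set.nonempty_iff_ne_empty.mpr ((hs.valid ℓ U hv).1 C hC)).mono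
        (subset_cladeUnion_of_mem hC)

lemma cladeUnion_finite (hs : IsHSDAG V E) {v : HNode Y} (hv : v ∈ V) :
    (cladeUnion v).Finite := by
  cases v with
  | ua => exact Set.finite_empty
  | node ℓ U =>
    by_cases hU : U = ∅
    · subst hU
      simp [cladeUnion_leaf]
    · have hp := hs.valid ℓ U hv
      rw [cladeUnion_of_ne_empty hU]
      exact hp.2.2.2.1.sUnion hp.2.2.2.2

/-- The strictness comes from `|U| ≠ 1`: a second clade of the parent is missed by the child. -/
lemma cladeUnion_ssubset_of_edge (hs : IsHSDAG V E) {p c : HNode Y} (hp : p ≠ HNode.ua)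
    (he : (p, c) ∈ E) : cladeUnion c ⊂ cladeUnion p := by
  cases p with
  | ua => exact absurd rfl hp
  | node ℓ U =>
    have hc := hs.edge_clade ℓ U c he
    have hpart := hs.valid ℓ U (hs.edge_mem _ he).1
    obtain ⟨C', hC', hne⟩ : ∃ C' ∈ U, C' ≠ cladeUnion c := by
      by_contra! hcon
      exact hpart.2.2.1 _ (Set.eq_singleton_iff_unique_mem.mpr ⟨hc, hcon⟩)
    obtain ⟨y, hy⟩ := Set.nonempty_iff_ne_empty.mpr (hpart.1 C' hC')
    refine (Set.ssubset_iff_of_subset (subset_cladeUnion_of_mem hc)).mpr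
      ⟨y, subset_cladeUnion_of_mem hC' hy, ?_⟩
    exact Set.disjoint_left.mp (hpart.2.1 C' hC' _ hc hne) hy

lemma cladeUnion_subset_of_reach (hs : IsHSDAG V E) {x y : HNode Y} (hx : x ≠ HNode.ua)
    (h : Reach E x y) : cladeUnion y ⊆ cladeUnion x := by
  induction h with
  | refl => exact subset_rfl
  | tail hxb hbc ih =>
    have hb : _ ≠ HNode.ua := fun hb => hx (hs.eq_ua_of_reach_ua (hb ▸ hxb))
    exact (hs.cladeUnion_ssubset_of_edge hb hbc).subset.trans ih

lemma not_reach_of_edge (hs : IsHSDAG V E) {a b : HNode Y} (he : (a, b) ∈ E) :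
    ¬ Reach E b a := by
  intro hr
  by_cases ha : a = HNode.ua
  · exact hs.ne_ua_of_edge he (hs.eq_ua_of_reach_ua (ha ▸ hr))
  · exact (hs.cladeUnion_ssubset_of_edge ha he).not_subset
      (hs.cladeUnion_subset_of_reach (hs.ne_ua_of_edge he) hr)

end IsHSDAG

namespace IsSubhistoryRooted

lemma ne_ua (hsub : IsSubhistoryRooted V E Vs Es vr) {v : HNode Y} (hv : v ∈ Vs) :
    v ≠ HNode.ua :=
  fun h => hsub.ua_not_mem (h ▸ hv)

lemma reach_of_mem (hsub : IsSubhistoryRooted V E Vs Es vr) {v : HNode Y} (hv : v ∈ Vs) :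
    Reach E vr v :=
  Relation.ReflTransGen.mono (fun _ _ h => hsub.subE h) _ _ (hsub.reach_root v hv)

lemma leaf_mem_of_mem_cladeUnion (hs : IsHSDAG V E) (hsub : IsSubhistoryRooted V E Vs Es vr)
    {v : HNode Y} (hv : v ∈ Vs) {y : Y} (hy : y ∈ cladeUnion v) : HNode.node y ∅ ∈ Vs := by
  induction hn : (cladeUnion v).ncard using Nat.strong_induction_on generalizing v with
  | _ n ih =>
  cases v with
  | ua => exact absurd hv hsub.ua_not_mem
  | node ℓ U =>
    by_cases hU : U = ∅
    · subst hU
      rw [cladeUnion_leaf, Set.mem_singleton_iff] at hy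
      exact hy ▸ hv
    · rw [cladeUnion_of_ne_empty hU] at hy
      obtain ⟨C, hC, hyC⟩ := hy
      obtain ⟨c, ⟨hcE, rfl⟩, -⟩ := hsub.unique_desc ℓ U hv C hC
      have hlt := Set.ncard_lt_ncard (hs.cladeUnion_ssubset_of_edge (hsub.ne_ua hv)
        (hsub.subE hcE)) (hs.cladeUnion_finite (hsub.subV hv))
      exact ih _ (hn ▸ hlt) (hsub.edge_mem _ hcE).2 hyC rfl

lemma leafLabels_eq (hsub : IsSubhistoryRooted V E Vs Es vr) (hs : IsHSDAG V E) :
    leafLabels Vs = cladeUnion vr := by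
  ext y
  refine ⟨fun hy => ?_, hsub.leaf_mem_of_mem_cladeUnion hs hsub.root_mem⟩
  have hsubset := hs.cladeUnion_subset_of_reach (hsub.ne_ua hsub.root_mem) (hsub.reach_of_mem hy)
  exact hsubset (by simp [cladeUnion_leaf])

lemma parent_not_mem (hsub : IsSubhistoryRooted V E Vs Es vr) (hs : IsHSDAG V E)
    {vp : HNode Y} (hpr : (vp, vr) ∈ E) : vp ∉ Vs :=
  fun h => hs.not_reach_of_edge hpr (hsub.reach_of_mem h)

end IsSubhistoryRooted

namespace IsHistory

lemma eq_of_edges_of_inter (ht : IsHistory V E) {x c c' : HNode Y} (hc : (x, c) ∈ E)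
    (hc' : (x, c') ∈ E) (hint : (cladeUnion c ∩ cladeUnion c').Nonempty) : c = c' := by
  obtain ⟨hs, ⟨d, -, hd⟩, hud⟩ := ht
  cases x with
  | ua => exact (hd c hc).trans (hd c' hc').symm
  | node ℓ U =>
    have hx := (hs.edge_mem _ hc).1
    have hcc : cladeUnion c = cladeUnion c' := by
      by_contra hne
      exact Set.not_disjoint_iff_nonempty_inter.mpr hint
        ((hs.valid ℓ U hx).2.1 _ (hs.edge_clade _ _ _ hc) _ (hs.edge_clade _ _ _ hc') hne)
    exact (hud ℓ U hx _ (hs.edge_clade _ _ _ hc)).unique ⟨hc, rfl⟩ ⟨hc', hcc.symm⟩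

/-- The two paths cannot branch: children of a node whose clade unions meet coincide. -/
lemma reach_or_reach_of_reach (ht : IsHistory V E) {x a b : HNode Y} (ha : Reach E x a)
    (hb : Reach E x b) (hint : (cladeUnion a ∩ cladeUnion b).Nonempty) :
    Reach E a b ∨ Reach E b a := by
  induction ha using Relation.ReflTransGen.head_induction_on with
  | refl => exact Or.inl hb
  | @head x c hxc hca ih =>
    rcases hb.cases_head with rfl | ⟨c', hxc', hc'b⟩
    · exact Or.inr (hca.head hxc)
    · have hsubset := Set.inter_subset_inter
        (ht.1.cladeUnion_subset_of_reach (ht.1.ne_ua_of_edge hxc) hca)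
        (ht.1.cladeUnion_subset_of_reach (ht.1.ne_ua_of_edge hxc') hc'b)
      obtain rfl := ht.eq_of_edges_of_inter hxc hxc' (hint.mono hsubset)
      exact ih hc'b

lemma reach_or_reach (ht : IsHistory V E) {a b : HNode Y} (ha : a ∈ V) (hb : b ∈ V)
    (hint : (cladeUnion a ∩ cladeUnion b).Nonempty) : Reach E a b ∨ Reach E b a :=
  ht.reach_or_reach_of_reach (ht.1.reach_ua a ha) (ht.1.reach_ua b hb) hint

lemma eq_of_edge_of_edge (ht : IsHistory V E) {p₁ p₂ v : HNode Y} (h₁ : (p₁, v) ∈ E)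
    (h₂ : (p₂, v) ∈ E) : p₁ = p₂ := by
  have hs := ht.1
  obtain ⟨y, hy⟩ := hs.cladeUnion_nonempty (hs.edge_mem _ h₁).2 (hs.ne_ua_of_edge h₁)
  have key : ∀ {p q}, (p, v) ∈ E → (q, v) ∈ E → Reach E p q → p = q := by
    intro p q hp hq hpq
    rcases hpq.cases_head with h | ⟨z, hpz, hzq⟩
    · exact h
    · have hvz := hs.cladeUnion_subset_of_reach (hs.ne_ua_of_edge hpz) (hzq.tail hq)
      obtain rfl := ht.eq_of_edges_of_inter hpz hp ⟨y, hvz hy, hy⟩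
      exact absurd hzq (hs.not_reach_of_edge hq)
  have hcomp : Reach E p₁ p₂ ∨ Reach E p₂ p₁ := by
    by_cases hu₁ : p₁ = HNode.ua
    · exact Or.inl (hu₁ ▸ hs.reach_ua _ (hs.edge_mem _ h₂).1)
    by_cases hu₂ : p₂ = HNode.ua
    · exact Or.inr (hu₂ ▸ hs.reach_ua _ (hs.edge_mem _ h₁).1)
    exact ht.reach_or_reach (hs.edge_mem _ h₁).1 (hs.edge_mem _ h₂).1
      ⟨y, (hs.cladeUnion_ssubset_of_edge hu₁ h₁).subset hy,
        (hs.cladeUnion_ssubset_of_edge hu₂ h₂).subset hy⟩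
  rcases hcomp with h | h
  · exact key h₁ h₂ h
  · exact (key h₂ h₁ h).symm

end IsHistory

namespace IsSubhistoryRooted

lemma mem_of_edge_of_fst_mem (hsub : IsSubhistoryRooted V E Vs Es vr) (hs : IsHSDAG V E)
    (hud : UniqueDesc V E) {a b : HNode Y} (he : (a, b) ∈ E) (ha : a ∈ Vs) : (a, b) ∈ Es := by
  cases a with
  | ua => exact absurd ha hsub.ua_not_mem
  | node ℓ U =>
    have hb := hs.edge_clade _ _ _ he
    obtain ⟨c, ⟨hcE, hcC⟩, -⟩ := hsub.unique_desc ℓ U ha _ hb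
    rwa [(hud ℓ U (hsub.subV ha) _ hb).unique ⟨he, rfl⟩ ⟨hsub.subE hcE, hcC⟩]

lemma mem_of_reach (hsub : IsSubhistoryRooted V E Vs Es vr) (hs : IsHSDAG V E)
    (hud : UniqueDesc V E) {a b : HNode Y} (h : Reach E a b) (ha : a ∈ Vs) : b ∈ Vs := by
  induction h with
  | refl => exact ha
  | tail _ hbc ih => exact (hsub.edge_mem _ (hsub.mem_of_edge_of_fst_mem hs hud hbc ih)).2

lemma snd_not_mem (hsub : IsSubhistoryRooted V E Vs Es vr) (ht : IsHistory V E)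
    {vp a b : HNode Y} (hpr : (vp, vr) ∈ E) (he : (a, b) ∈ E) (hes : (a, b) ∉ Es)
    (hne : (a, b) ≠ (vp, vr)) : b ∉ Vs := by
  intro hb
  rcases (hsub.reach_root b hb).cases_tail with rfl | ⟨c, -, hcb⟩
  · exact hne (by rw [ht.eq_of_edge_of_edge he hpr])
  · exact hes (by rwa [ht.eq_of_edge_of_edge he (hsub.subE hcb)])

lemma mem_of_cladeUnion_subset (hsub : IsSubhistoryRooted V E Vs Es vr) (ht : IsHistory V E)
    {v : HNode Y} (hv : v ∈ V) (hne : v ≠ HNode.ua)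
    (hsubset : cladeUnion v ⊆ cladeUnion vr) : v ∈ Vs := by
  obtain ⟨y, hy⟩ := ht.1.cladeUnion_nonempty hv hne
  rcases ht.reach_or_reach hv (hsub.subV hsub.root_mem) ⟨y, hy, hsubset hy⟩ with h | h
  · rcases h.cases_head with rfl | ⟨z, hvz, hzvr⟩
    · exact hsub.root_mem
    · exact absurd (hsubset.trans (ht.1.cladeUnion_subset_of_reach (ht.1.ne_ua_of_edge hvz) hzvr))
        (ht.1.cladeUnion_ssubset_of_edge hne hvz).not_subset
  · exact hsub.mem_of_reach ht.1 ht.2.2 h hsub.root_mem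

end IsSubhistoryRooted

/-- The edges of the swap `t ◁ s'`, for `t = (V, E)`, `s = (Vs, Es)` rooted at `vr` with parent
`vp`, and `s' = (Vs', Es')` rooted at `vr'`. -/
def swapEdges (E Es Es' : Set (HNode Y × HNode Y)) (vp vr vr' : HNode Y) :
    Set (HNode Y × HNode Y) :=
  (E \ (Es ∪ {(vp, vr)})) ∪ (Es' ∪ {(vp, vr')})

variable {V₂ Vs' : Set (HNode Y)} {E₂ Es' : Set (HNode Y × HNode Y)} {vp vr' : HNode Y}

lemma mem_swapEdges {e : HNode Y × HNode Y} :
    e ∈ swapEdges E Es Es' vp vr vr' ↔ (e ∈ E ∧ e ∉ Es ∧ e ≠ (vp, vr)) ∨ e ∈ Es' ∨ e = (vp, vr') := by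
  simp only [swapEdges, Set.mem_union, Set.mem_sdiff, Set.mem_singleton_iff]
  tauto

lemma mem_swapEdges_iff_of_mem (hsub : IsSubhistoryRooted V E Vs Es vr) (hs : IsHSDAG V E)
    (hud : UniqueDesc V E) (hpr : (vp, vr) ∈ E) (hdisj : ∀ v ∈ Vs', v ∈ V → v ∈ Vs)
    {x c : HNode Y} (hx : x ∈ Vs') : (x, c) ∈ swapEdges E Es Es' vp vr vr' ↔ (x, c) ∈ Es' := by
  rw [mem_swapEdges]
  refine ⟨?_, fun h => Or.inr (Or.inl h)⟩
  rintro (⟨he, hes, -⟩ | h | h)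
  · exact absurd (hsub.mem_of_edge_of_fst_mem hs hud he (hdisj x hx (hs.edge_mem _ he).1)) hes
  · exact h
  · obtain ⟨rfl, -⟩ := Prod.mk.inj h
    exact absurd (hdisj _ hx (hs.edge_mem _ hpr).1) (hsub.parent_not_mem hs hpr)

lemma existsUnique_swapEdges_of_not_mem (hsub : IsSubhistoryRooted V E Vs Es vr)
    (hsub' : IsSubhistoryRooted V₂ E₂ Vs' Es' vr') (hpr : (vp, vr) ∈ E) {β : Type*}
    {f : HNode Y → β} (hf : f vr' = f vr) {x : HNode Y} (hx : x ∉ Vs) (hx' : x ∉ Vs') {b : β}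
    (h : ∃! c, (x, c) ∈ E ∧ f c = b) :
    ∃! c, (x, c) ∈ swapEdges E Es Es' vp vr vr' ∧ f c = b := by
  have hmem : ∀ c, (x, c) ∈ swapEdges E Es Es' vp vr vr' ↔
      (x, c) ∈ E ∧ (x, c) ≠ (vp, vr) ∨ (x, c) = (vp, vr') := by
    intro c
    have : (x, c) ∉ Es := fun h => hx (hsub.edge_mem _ h).1
    have : (x, c) ∉ Es' := fun h => hx' (hsub'.edge_mem _ h).1
    rw [mem_swapEdges]
    tauto
  simp only [hmem]
  by_cases hxp : x = vp
  · subst hxp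
    simpa only [ne_eq, Prod.mk.injEq, true_and] using existsUnique_replace (p := fun c => (x, c) ∈ E) hpr hf h
  · simpa [hxp] using h

lemma reach_swapEdges (hsub : IsSubhistoryRooted V E Vs Es vr) (hs : IsHSDAG V E)
    (hud : UniqueDesc V E) {a w : HNode Y} (h : Reach E a w) (hw : w ∉ Vs) :
    Reach (swapEdges E Es Es' vp vr vr') a w := by
  induction h with
  | refl => exact .refl
  | @tail b c _ hbc ih =>
    have hb : b ∉ Vs := fun hb =>
      hw (hsub.edge_mem _ (hsub.mem_of_edge_of_fst_mem hs hud hbc hb)).2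
    refine (ih hb).tail (mem_swapEdges.mpr (Or.inl ⟨hbc, fun h => hb (hsub.edge_mem _ h).1, ?_⟩))
    intro h
    obtain ⟨-, rfl⟩ := Prod.mk.inj h
    exact hw hsub.root_mem

lemma reach_ua_swapEdges (hsub : IsSubhistoryRooted V E Vs Es vr) (hs : IsHSDAG V E)
    (hud : UniqueDesc V E) (hsub' : IsSubhistoryRooted V₂ E₂ Vs' Es' vr')
    (hpr : (vp, vr) ∈ E) :
    ∀ w ∈ (V \ Vs) ∪ Vs', Reach (swapEdges E Es Es' vp vr vr') HNode.ua w := by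
  rintro w (⟨hw, hws⟩ | hw)
  · exact reach_swapEdges hsub hs hud (hs.reach_ua w hw) hws
  · have hvr' : Reach (swapEdges E Es Es' vp vr vr') HNode.ua vr' :=
      (reach_swapEdges hsub hs hud (hs.reach_ua vp (hs.edge_mem _ hpr).1)
        (hsub.parent_not_mem hs hpr)).tail (mem_swapEdges.mpr (Or.inr (Or.inr rfl)))
    exact hvr'.trans (Relation.ReflTransGen.mono
      (fun _ _ h => mem_swapEdges.mpr (Or.inr (Or.inl h))) _ _ (hsub'.reach_root w hw))

lemma edge_mem_swapEdges (ht : IsHistory V E) (hsub : IsSubhistoryRooted V E Vs Es vr)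
    (hsub' : IsSubhistoryRooted V₂ E₂ Vs' Es' vr') (hpr : (vp, vr) ∈ E) :
    ∀ e ∈ swapEdges E Es Es' vp vr vr', e.1 ∈ (V \ Vs) ∪ Vs' ∧ e.2 ∈ (V \ Vs) ∪ Vs' := by
  have hs := ht.1
  rintro ⟨a, b⟩ he
  rcases mem_swapEdges.mp he with ⟨he, hes, hne⟩ | he | he
  · have ha : a ∉ Vs := fun ha => hes (hsub.mem_of_edge_of_fst_mem hs ht.2.2 he ha)
    exact ⟨Or.inl ⟨(hs.edge_mem _ he).1, ha⟩,
      Or.inl ⟨(hs.edge_mem _ he).2, hsub.snd_not_mem ht hpr he hes hne⟩⟩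
  · exact ⟨Or.inr (hsub'.edge_mem _ he).1, Or.inr (hsub'.edge_mem _ he).2⟩
  · obtain ⟨rfl, rfl⟩ := Prod.mk.inj he
    exact ⟨Or.inl ⟨(hs.edge_mem _ hpr).1, hsub.parent_not_mem hs hpr⟩, Or.inr hsub'.root_mem⟩

theorem IsHistory.swap (ht : IsHistory V E) (h₂ : IsHSDAG V₂ E₂)
    (hsub : IsSubhistoryRooted V E Vs Es vr) (hsub' : IsSubhistoryRooted V₂ E₂ Vs' Es' vr')
    (hpr : (vp, vr) ∈ E) (hleaf : leafLabels Vs = leafLabels Vs') :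
    IsHistory ((V \ Vs) ∪ Vs') (swapEdges E Es Es' vp vr vr') := by
  obtain ⟨hs, huac, hud⟩ := id ht
  have hCU : cladeUnion vr' = cladeUnion vr := by
    rw [← hsub'.leafLabels_eq h₂, ← hsub.leafLabels_eq hs, hleaf]
  have hdisj : ∀ v ∈ Vs', v ∈ V → v ∈ Vs := fun v hv hvV =>
    hsub.mem_of_cladeUnion_subset ht hvV (hsub'.ne_ua hv)
      (hCU ▸ h₂.cladeUnion_subset_of_reach (hsub'.ne_ua hsub'.root_mem) (hsub'.reach_of_mem hv))
  have hud' : UniqueDesc ((V \ Vs) ∪ Vs') (swapEdges E Es Es' vp vr vr') := by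
    rintro ℓ U (⟨hxV, hxs⟩ | hx') C hC
    · exact existsUnique_swapEdges_of_not_mem hsub hsub' hpr hCU hxs
        (fun hx' => hxs (hdisj _ hx' hxV)) (hud ℓ U hxV C hC)
    · simpa only [mem_swapEdges_iff_of_mem hsub hs hud hpr hdisj hx']
        using hsub'.unique_desc ℓ U hx' C hC
  refine ⟨⟨Or.inl ⟨hs.ua_mem, hsub.ua_not_mem⟩, ?_, ?_, ?_, ?_, ?_,
    fun ℓ U hx C hC => (hud' ℓ U hx C hC).exists⟩, ?_, hud'⟩
  · rintro ℓ U (hx | hx)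
    · exact hs.valid ℓ U hx.1
    · exact h₂.valid ℓ U (hsub'.subV hx)
  · exact edge_mem_swapEdges ht hsub hsub' hpr
  · exact reach_ua_swapEdges hsub hs hud hsub' hpr
  · intro v he
    rcases mem_swapEdges.mp he with ⟨he, -, -⟩ | he | he
    · exact hs.no_in_ua v he
    · exact hsub'.ua_not_mem (hsub'.edge_mem _ he).2
    · exact hsub'.ne_ua hsub'.root_mem (Prod.mk.inj he).2.symm
  · intro ℓ U c he
    rcases mem_swapEdges.mp he with ⟨he, -, -⟩ | he | he
    · exact hs.edge_clade ℓ U c he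
    · exact h₂.edge_clade ℓ U c (hsub'.subE he)
    · obtain ⟨hx, rfl⟩ := Prod.mk.inj he
      exact hCU ▸ hs.edge_clade ℓ U vr (hx ▸ hpr)
  · simpa using existsUnique_swapEdges_of_not_mem hsub hsub' hpr (f := fun _ => ()) rfl
      hsub.ua_not_mem hsub'.ua_not_mem (b := ()) (by simpa using huac)

theorem HistoryIn.of_swapStepUsing {t t' : Hist Y} (ht : HistoryIn V E t.1 t.2)
    (hstep : SwapStepUsing {u : Hist Y | HistoryIn V E u.1 u.2} t t') :
    HistoryIn V E t'.1 t'.2 := by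
  obtain ⟨t₂, ⟨h₂V, h₂E, h₂⟩, Vs', Es', vr', vp, hsub', hpr', Vs, Es, vr, hsub, hpr, hleaf, rfl⟩ :=
    hstep
  obtain ⟨htV, htE, ht⟩ := ht
  refine ⟨?_, ?_, ht.swap h₂.1 hsub hsub' hpr hleaf⟩
  · exact Set.union_subset (Set.sdiff_subset.trans htV) (hsub'.subV.trans h₂V)
  · exact Set.union_subset (Set.sdiff_subset.trans htE)
      (Set.union_subset (hsub'.subE.trans h₂E) (Set.singleton_subset_iff.mpr (h₂E hpr')))

end

theorem histories_closed_under_swaps_general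
    (V : Set (HNode Y)) (E : Set (HNode Y × HNode Y))
    (t t' : Hist Y) (ht : HistoryIn V E t.1 t.2)
    (hsteps : Relation.ReflTransGen
      (SwapStepUsing {u : Hist Y | HistoryIn V E u.1 u.2}) t t') :
    HistoryIn V E t'.1 t'.2 := by
  induction hsteps with
  | refl => exact ht
  | tail _ hstep ih => exact ih.of_swapStepUsing hstep

/-- Lemma `closedundertl`: the histories of a history sDAG are closed
under (iterated) subhistory swaps with subhistories of histories in the sDAG. -/
theorem histories_closed_under_swaps
    (V : Set (HNode Y)) (E : Set (HNode Y × HNode Y)) (h : IsHSDAG V E)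
    (t t' : Hist Y) (ht : HistoryIn V E t.1 t.2)
    (hsteps : Relation.ReflTransGen
      (SwapStepUsing {u : Hist Y | HistoryIn V E u.1 u.2}) t t') :
    HistoryIn V E t'.1 t'.2 :=
  histories_closed_under_swaps_general V E t t' ht hsteps

end HistorySDAGs
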